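/- arXiv:1712.01452 — 2 statements merged into one kernel-verified Lean document; each statement's English description precedes it below -/
import Mathlib

section
/- Let k be a positive integer and f a C^{k+1} function. Then f'(x) = (1/h)·Σ_{i=1}^k c_i·[f(x+ih) - f(x)] + O(h^k), where c_i = ((-1)^{i-1}/i)·C(k,i). -/
/-!
Expand each `f (x + i h)` by Taylor's theorem to order `k`, with remainder `O(h^(k+1))`. The
weights satisfy `∑ c_i i^j = [j = 1]` for `1 ≤ j ≤ k`: after cancelling one factor `i`, this is
the vanishing of the `k`-th forward difference of the polynomial `t^(j-1)` of degree `< k`. Hence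
the weighted sum reproduces the Taylor polynomial part as exactly `h f'(x)`, and dividing the
remainders by `h` leaves `O(h^k)`.
-/

open Finset
open scoped Nat

theorem sum_range_neg_one_pow_mul_choose_mul_pow_eq_zero {R : Type*} [CommRing R] {m k : ℕ}
    (hm : m < k) :
    ∑ i ∈ range (k + 1), (-1 : R) ^ (k - i) * k.choose i * (i : R) ^ m = 0 := by
  simpa [fwdDiff_iter_eq_sum_shift, zsmul_eq_mul] using
    congrFun (fwdDiff_iter_pow_eq_zero_of_lt (R := R) hm) 0

def forwardDiffCoeff (K : Type*) [Field K] (k i : ℕ) : K := (-1) ^ (i - 1) / i * k.choose i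

theorem sum_forwardDiffCoeff_mul_pow_succ {K : Type*} [Field K] [CharZero K] {k j : ℕ}
    (hj : j < k) :
    ∑ i ∈ Icc 1 k, forwardDiffCoeff K k i * (i : K) ^ (j + 1) = if j = 0 then 1 else 0 := by
  have hterm : ∀ i ∈ Icc 1 k, forwardDiffCoeff K k i * (i : K) ^ (j + 1)
      = -(-1) ^ k * ((-1) ^ (k - i) * k.choose i * (i : K) ^ j) := by
    intro i hi
    obtain ⟨hi1, hik⟩ := mem_Icc.1 hi
    have hsign : (-1 : K) ^ (i - 1) = -(-1) ^ k * (-1) ^ (k - i) := by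
      rw [neg_mul, ← pow_add, show k + (k - i) = (i - 1) + 1 + 2 * (k - i) by omega, pow_add,
        pow_add, pow_mul]
      simp
    have hi0 : (i : K) ≠ 0 := by exact_mod_cast (show i ≠ 0 by omega)
    rw [forwardDiffCoeff, hsign, pow_succ']
    field_simp
  have hsum := sum_range_neg_one_pow_mul_choose_mul_pow_eq_zero (R := K) hj
  rw [range_eq_Ico, sum_eq_sum_Ico_succ_bot (by omega), Ico_add_one_right_eq_Icc] at hsum
  rw [sum_congr rfl hterm, ← mul_sum, eq_neg_of_add_eq_zero_right hsum]
  rcases eq_or_ne j 0 with rfl | hj0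
  · simp [← pow_add, ← two_mul, pow_mul]
  · simp [hj0]

theorem sum_forwardDiffCoeff_mul_taylor_sub {K : Type*} [Field K] [CharZero K] {k : ℕ}
    (hk : 1 ≤ k) (a : ℕ → K) (h : K) :
    ∑ i ∈ Icc 1 k, forwardDiffCoeff K k i *
      (∑ j ∈ range (k + 1), ((j ! : K)⁻¹ * (i * h) ^ j) * a j - a 0) = h * a 1 := by
  have hcol : ∀ j ∈ range k, ∑ i ∈ Icc 1 k, forwardDiffCoeff K k i *
      (((j + 1)! : K)⁻¹ * (i * h) ^ (j + 1) * a (j + 1)) = if j = 0 then h * a 1 else 0 := by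
    intro j hj
    calc _ = ((j + 1)! : K)⁻¹ * h ^ (j + 1) * a (j + 1) *
          ∑ i ∈ Icc 1 k, forwardDiffCoeff K k i * (i : K) ^ (j + 1) := by
          rw [mul_sum]; exact sum_congr rfl fun i _ ↦ by ring
      _ = _ := by
          rw [sum_forwardDiffCoeff_mul_pow_succ (mem_range.1 hj)]
          rcases eq_or_ne j 0 with rfl | hj0
          · simp
          · simp [hj0]
  simp only [sum_range_succ', pow_zero, mul_one, Nat.factorial_zero, Nat.cast_one, inv_one,
    one_mul, add_sub_cancel_right, mul_sum]
  rw [sum_comm, sum_congr rfl hcol, sum_ite_eq' _ _ (fun _ ↦ h * a 1), if_pos (by simp; omega)]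

theorem ContDiff.exists_norm_sub_taylor_sum_le {E : Type*} [NormedAddCommGroup E]
    [NormedSpace ℝ E] {f : ℝ → E} {n : ℕ} (hf : ContDiff ℝ (n + 1) f) (x : ℝ) {L : ℝ}
    (hL : 0 < L) :
    ∃ C, ∀ t ∈ Set.Icc 0 L,
      ‖f (x + t) - ∑ j ∈ range (n + 1), ((j ! : ℝ)⁻¹ * t ^ j) • iteratedDeriv j f x‖
        ≤ C * t ^ (n + 1) := by
  have hxL : x < x + L := lt_add_of_pos_right x hL
  obtain ⟨C, hC⟩ := exists_taylor_mean_remainder_bound hxL.le hf.contDiffOn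
  refine ⟨C, fun t ht ↦ ?_⟩
  have hderiv : ∀ j ∈ range (n + 1),
      iteratedDerivWithin j f (Set.Icc x (x + L)) x = iteratedDeriv j f x := fun j hj ↦
    iteratedDerivWithin_eq_iteratedDeriv (uniqueDiffOn_Icc hxL)
      (hf.contDiffAt.of_le (by exact_mod_cast (mem_range.1 hj).le)) (Set.left_mem_Icc.2 hxL.le)
  have hbound := hC (x + t) ⟨by linarith [ht.1], by linarith [ht.2]⟩
  rwa [taylor_within_apply, add_sub_cancel_left,
    sum_congr rfl fun j hj ↦ by rw [hderiv j hj]] at hbound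

theorem deriv_sub_forwardDiff_eq {k : ℕ} (hk : 1 ≤ k) (f : ℝ → ℝ) (x : ℝ) {h : ℝ}
    (h0 : h ≠ 0) :
    deriv f x - (1 / h) * ∑ i ∈ Icc 1 k, forwardDiffCoeff ℝ k i * (f (x + i * h) - f x)
      = -((1 / h) * ∑ i ∈ Icc 1 k, forwardDiffCoeff ℝ k i * (f (x + i * h) -
          ∑ j ∈ range (k + 1), ((j ! : ℝ)⁻¹ * (i * h) ^ j) • iteratedDeriv j f x)) := by
  have hexact := sum_forwardDiffCoeff_mul_taylor_sub hk (fun j ↦ iteratedDeriv j f x) h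
  simp only [iteratedDeriv_one, iteratedDeriv_zero] at hexact
  have hsplit : ∑ i ∈ Icc 1 k, forwardDiffCoeff ℝ k i * (f (x + i * h) - f x)
      = h * deriv f x + ∑ i ∈ Icc 1 k, forwardDiffCoeff ℝ k i * (f (x + i * h) -
          ∑ j ∈ range (k + 1), ((j ! : ℝ)⁻¹ * (i * h) ^ j) • iteratedDeriv j f x) := by
    rw [← hexact, ← sum_add_distrib]
    exact sum_congr rfl fun i _ ↦ by simp only [smul_eq_mul]; ring
  rw [hsplit, mul_add, ← mul_assoc, one_div_mul_cancel h0, one_mul, sub_add_cancel_left]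

theorem forward_difference_order_k (k : ℕ) (hk : 1 ≤ k) (f : ℝ → ℝ)
    (hf : ContDiff ℝ (k + 1) f)
    (c : ℕ → ℝ) (hc : ∀ i, c i = ((-1) ^ (i - 1) / i) * (k.choose i)) (x : ℝ) :
    ∃ C > 0, ∃ h₀ > 0, ∀ h : ℝ, 0 < h → h ≤ h₀ →
      |deriv f x - (1 / h) * ∑ i ∈ Finset.Icc 1 k, c i * (f (x + i * h) - f x)|
        ≤ C * h ^ k := by
  obtain rfl : c = forwardDiffCoeff ℝ k := funext hc
  obtain ⟨C, hC⟩ := hf.exists_norm_sub_taylor_sum_le x (L := k) (by exact_mod_cast hk)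
  set B := ∑ i ∈ Icc 1 k, |forwardDiffCoeff ℝ k i| * (|C| * (i : ℝ) ^ (k + 1))
  have hB : 0 ≤ B := sum_nonneg fun i _ ↦ by positivity
  refine ⟨B + 1, by positivity, 1, one_pos, fun h h0 h1 ↦ ?_⟩
  rw [deriv_sub_forwardDiff_eq hk f x h0.ne', abs_neg, abs_mul, abs_of_pos (one_div_pos.2 h0)]
  calc _ ≤ (1 / h) * ∑ i ∈ Icc 1 k, |forwardDiffCoeff ℝ k i| * (|C| * (i * h) ^ (k + 1)) := by
        gcongr
        refine (abs_sum_le_sum_abs _ _).trans (sum_le_sum fun i hi ↦ ?_)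
        have hih : (i : ℝ) * h ≤ k :=
          (mul_le_of_le_one_right (by positivity) h1).trans (by exact_mod_cast (mem_Icc.1 hi).2)
        rw [abs_mul]
        gcongr
        exact (hC _ ⟨by positivity, hih⟩).trans (by gcongr; exact le_abs_self C)
    _ = B * h ^ k := by
        rw [mul_sum, sum_mul]
        refine sum_congr rfl fun i _ ↦ ?_
        field_simp
        ring
    _ ≤ (B + 1) * h ^ k := by gcongr; linarith
end

section
/- Let m and n be positive integers and f a C^{n+m+1} function. Then f'(x) = (1/h)·Σ_{i=-m}^n c_i·[f(x+ih) - f(x)] + O(h^{n+m}), where c_0 = 0 and c_i = (-1)^{i-1}·C(n+m, i+m) / (i·C(n+m, m)) for i ≠ 0. -/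
/-!
For `1 ≤ k ≤ n + m` the weights satisfy `∑ c i * i ^ k = [k = 1]`: after the shift `j = i + m`,
`c i * i` is a constant multiple of the `j`-th coefficient of the `(n + m)`-th forward difference,
which annihilates polynomials of degree `< n + m`; the discrepancy at `i = 0`, where
`c 0 * 0 ^ k = 0`, is what produces the moment for `k = 1`. Hence the weighted sum of differences of the
degree `n + m` Taylor polynomial of `f` at `x` is exactly `h * f' x`, while the Taylor remainders
contribute `O(h ^ (n + m + 1))`, i.e. `O(h ^ (n + m))` after division by `h`.
-/

open Finset Filter Topology Asymptotics

theorem sum_range_neg_one_pow_mul_choose_mul_add_pow {R : Type*} [CommRing R] {r N : ℕ}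
    (hr : r < N) (a : R) :
    ∑ j ∈ range (N + 1), (-1) ^ (N - j) * (N.choose j : R) * (a + j) ^ r = 0 := by
  have := congr_fun (fwdDiff_iter_pow_eq_zero_of_lt (R := R) hr) a
  rw [fwdDiff_iter_eq_sum_shift] at this
  simpa [zsmul_eq_mul] using this

theorem sum_Icc_neg_eq_sum_range {M : Type*} [AddCommMonoid M] (m n : ℕ) (g : ℤ → M) :
    ∑ i ∈ Icc (-(m : ℤ)) n, g i = ∑ j ∈ range (n + m + 1), g (j - m) := by
  refine sum_nbij' (fun i ↦ (i + m).toNat) (fun j ↦ (j : ℤ) - m) ?_ ?_ ?_ ?_ ?_ <;>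
    intro i hi <;> simp only [mem_Icc, mem_range] at hi ⊢ <;> first | omega | congr 1; omega

theorem neg_one_zpow_sub_sub_one {R : Type*} [DivisionRing R] {m n j : ℕ} (hj : j ≤ n + m) :
    (-1 : R) ^ ((j : ℤ) - m - 1) = (-1) ^ (n + 1) * (-1) ^ (n + m - j) := by
  rw [← pow_add, ← zpow_natCast, neg_one_zpow_eq_ite, neg_one_zpow_eq_ite]
  congr 1
  simp only [eq_iff_iff]
  push_cast [Nat.cast_sub hj]
  simp [Int.even_add, Int.even_sub, parity_simps, ← Nat.not_even_iff_odd]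
  tauto

theorem sum_mul_pow_eq_ite_one {m n : ℕ} {c : ℤ → ℝ}
    (hc : ∀ i : ℤ, -(m : ℤ) ≤ i → i ≤ n → i ≠ 0 →
      c i = (-1 : ℝ) ^ (i - 1) * ((n + m).choose (i + m).toNat) / (i * ((n + m).choose m)))
    {k : ℕ} (hk : 1 ≤ k) (hkN : k ≤ n + m) :
    ∑ i ∈ Icc (-(m : ℤ)) n, c i * (i : ℝ) ^ k = if k = 1 then 1 else 0 := by
  have hchoose : ((n + m).choose m : ℝ) ≠ 0 := by
    simpa using (Nat.choose_pos (Nat.le_add_left m n)).ne'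
  set q : ℝ := (-1) ^ (n + 1) / (n + m).choose m
  -- At `j = m` the first summand on the right is `-[k = 1]`, while the left side vanishes.
  have hterm : ∀ j ∈ range (n + m + 1), c ((j : ℤ) - m) * (((j : ℤ) - m : ℤ) : ℝ) ^ k =
      q * ((-1) ^ (n + m - j) * ((n + m).choose j : ℝ) * (-(m : ℝ) + j) ^ (k - 1)) +
        if j = m then (if k = 1 then 1 else 0) else 0 := by
    intro j hj
    rw [mem_range] at hj
    obtain rfl | hjm := eq_or_ne j m
    · obtain rfl | hk1 := eq_or_ne k 1
      · have hsign : (-1 : ℝ) ^ (n + 1) * (-1) ^ n = -1 := by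
          rw [← pow_add]; exact Odd.neg_one_pow ⟨n, by ring⟩
        simp only [q, Nat.add_sub_cancel, sub_self, Int.cast_zero, if_true]
        field_simp
        rw [hsign]
        norm_num
      · simp [q, hk1, zero_pow (by omega : k - 1 ≠ 0), zero_pow (by omega : k ≠ 0)]
    · have hj0 : (j : ℤ) - m ≠ 0 := by omega
      rw [hc _ (by omega) (by omega) hj0, neg_one_zpow_sub_sub_one (by omega : j ≤ n + m),
        if_neg hjm, add_zero, show ((j : ℤ) - m + m).toNat = j by omega]
      have hd : (((j : ℤ) - m : ℤ) : ℝ) ≠ 0 := by exact_mod_cast hj0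
      rw [← mul_pow_sub_one (by omega : k ≠ 0), show -(m : ℝ) + j = (((j : ℤ) - m : ℤ) : ℝ) by
        push_cast; ring]
      simp only [q]
      field_simp
  rw [sum_Icc_neg_eq_sum_range, sum_congr rfl hterm, sum_add_distrib, ← mul_sum,
    sum_range_neg_one_pow_mul_choose_mul_add_pow (by omega), sum_ite_eq' _ _ _,
    if_pos (mem_range.2 (by omega))]
  simp

theorem sum_mul_sum_range_pow_sub {ι R : Type*} [CommRing R] (s : Finset ι) (w p : ι → R)
    (a : ℕ → R) {N : ℕ} (hN : 1 ≤ N)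
    (hmom : ∀ k, 1 ≤ k → k ≤ N → ∑ i ∈ s, w i * p i ^ k = if k = 1 then 1 else 0) (h : R) :
    ∑ i ∈ s, w i * (∑ k ∈ range (N + 1), a k * (p i * h) ^ k - a 0) = a 1 * h := by
  calc ∑ i ∈ s, w i * (∑ k ∈ range (N + 1), a k * (p i * h) ^ k - a 0)
      = ∑ k ∈ range N, a (k + 1) * h ^ (k + 1) * ∑ i ∈ s, w i * p i ^ (k + 1) := by
        simp_rw [sum_range_succ', pow_zero, mul_one, add_sub_cancel_right, mul_sum]
        rw [sum_comm]
        refine sum_congr rfl fun k _ ↦ sum_congr rfl fun i _ ↦ ?_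
        ring
    _ = a 1 * h := by
        rw [sum_congr rfl fun k hk ↦ by rw [hmom (k + 1) (by omega) (mem_range.1 hk)]]
        simp [Nat.one_le_iff_ne_zero.1 hN]

theorem taylorWithinEval_univ_add (f : ℝ → ℝ) (N : ℕ) (x t : ℝ) :
    taylorWithinEval f N Set.univ x (x + t) =
      ∑ k ∈ range (N + 1), iteratedDeriv k f x / k.factorial * t ^ k := by
  simp only [taylor_within_apply, iteratedDerivWithin_univ, add_sub_cancel_left, smul_eq_mul]
  refine sum_congr rfl fun k _ ↦ ?_
  ring

theorem taylor_isBigO_univ {E : Type*} [NormedAddCommGroup E] [NormedSpace ℝ E] {f : ℝ → E}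
    {x₀ : ℝ} {n : ℕ} (hf : ContDiff ℝ (n + 1) f) :
    (fun x ↦ f x - taylorWithinEval f n Set.univ x₀ x) =O[𝓝 x₀] fun x ↦ (x - x₀) ^ (n + 1) := by
  have hlittle := taylor_isLittleO_univ (x₀ := x₀) (n := n + 1) (by exact_mod_cast hf)
  have hterm : (fun x ↦ (((n + 1 : ℝ) * n.factorial)⁻¹ * (x - x₀) ^ (n + 1)) •
      iteratedDerivWithin (n + 1) f Set.univ x₀) =O[𝓝 x₀] fun x ↦ (x - x₀) ^ (n + 1) :=
    .of_bound (‖((n + 1 : ℝ) * n.factorial)⁻¹‖ * ‖iteratedDerivWithin (n + 1) f Set.univ x₀‖)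
      (.of_forall fun x ↦ (by rw [norm_smul, norm_mul]; ring : _ = _).le)
  refine (hlittle.isBigO.add hterm).congr_left fun x ↦ ?_
  rw [taylorWithinEval_succ]
  abel

theorem isBigO_comp_add_const_mul {E : Type*} [NormedAddCommGroup E] {g : ℝ → E} {x : ℝ}
    {N : ℕ} (hg : g =O[𝓝 x] fun y ↦ (y - x) ^ N) (a : ℝ) :
    (fun h ↦ g (x + a * h)) =O[𝓝 0] fun h ↦ h ^ N := by
  have hlim : Tendsto (fun h : ℝ ↦ x + a * h) (𝓝 0) (𝓝 x) :=
    (by fun_prop : Continuous fun h : ℝ ↦ x + a * h).tendsto' 0 x (by simp)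
  refine (hg.comp_tendsto hlim).trans ?_
  simp only [Function.comp_def, add_sub_cancel_left, mul_pow]
  exact isBigO_const_mul_self _ _ _

theorem exists_pos_bound_inv_mul_of_isBigO {g : ℝ → ℝ} {N : ℕ}
    (hg : g =O[𝓝 0] fun h ↦ h ^ (N + 1)) :
    ∃ C > 0, ∃ h₀ > 0, ∀ h : ℝ, 0 < h → h ≤ h₀ → |h⁻¹ * g h| ≤ C * h ^ N := by
  obtain ⟨C, hC, hCg⟩ := hg.exists_pos
  obtain ⟨b, hb, hbound⟩ := Metric.eventually_nhds_iff.1 hCg.bound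
  refine ⟨C, hC, b / 2, half_pos hb, fun h hh hhb ↦ ?_⟩
  have hgh : |g h| ≤ C * (h ^ N * h) := by
    simpa [abs_of_pos hh, pow_succ] using hbound (show dist h 0 < b by
      rw [Real.dist_0_eq_abs, abs_of_pos hh]; linarith)
  rw [abs_mul, abs_inv, abs_of_pos hh, inv_mul_le_iff₀ hh]
  linarith

theorem centered_difference_order_general (m n : ℕ) (hn : 1 ≤ n)
    (f : ℝ → ℝ) (hf : ContDiff ℝ (n + m + 1) f)
    (c : ℤ → ℝ)
    (hc : ∀ i : ℤ, -(m : ℤ) ≤ i → i ≤ n → i ≠ 0 →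
      c i = (-1 : ℝ) ^ (i - 1) * ((n + m).choose (i + m).toNat) /
              (i * ((n + m).choose m))) (x : ℝ) :
    ∃ C > 0, ∃ h₀ > 0, ∀ h : ℝ, 0 < h → h ≤ h₀ →
      |deriv f x - (1 / h) * ∑ i ∈ Finset.Icc (-(m : ℤ)) n,
          c i * (f (x + i * h) - f x)| ≤ C * h ^ (n + m) := by
  set T := taylorWithinEval f (n + m) Set.univ x
  have htaylor : ∀ h, ∑ i ∈ Icc (-(m : ℤ)) n, c i * (T (x + i * h) - f x) = deriv f x * h := by
    intro h
    simpa [T, taylorWithinEval_univ_add] using sum_mul_sum_range_pow_sub _ c (fun i ↦ (i : ℝ))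
      (fun k ↦ iteratedDeriv k f x / k.factorial) (by omega)
      (fun k hk hkN ↦ sum_mul_pow_eq_ite_one hc hk hkN) h
  have hremainder : (fun h ↦ ∑ i ∈ Icc (-(m : ℤ)) n, c i * (f (x + i * h) - T (x + i * h)))
      =O[𝓝 0] fun h ↦ h ^ (n + m + 1) :=
    .fun_sum fun i _ ↦ (isBigO_comp_add_const_mul (taylor_isBigO_univ hf) i).const_mul_left (c i)
  obtain ⟨C, hC, h₀, hh₀, hbound⟩ := exists_pos_bound_inv_mul_of_isBigO hremainder
  refine ⟨C, hC, h₀, hh₀, fun h hh hhh₀ ↦ ?_⟩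
  have hsplit : ∑ i ∈ Icc (-(m : ℤ)) n, c i * (f (x + i * h) - T (x + i * h)) =
      ∑ i ∈ Icc (-(m : ℤ)) n, c i * (f (x + i * h) - f x) - deriv f x * h := by
    rw [← htaylor, ← sum_sub_distrib]
    congr! 1 with i
    ring
  rw [← abs_neg]
  convert hbound h hh hhh₀ using 2
  rw [hsplit]
  field_simp
  ring

theorem centered_difference_order (m n : ℕ) (hm : 1 ≤ m) (hn : 1 ≤ n)
    (f : ℝ → ℝ) (hf : ContDiff ℝ (n + m + 1) f)
    (c : ℤ → ℝ) (hc0 : c 0 = 0)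
    (hc : ∀ i : ℤ, -(m : ℤ) ≤ i → i ≤ n → i ≠ 0 →
      c i = (-1 : ℝ) ^ (i - 1) * ((n + m).choose (i + m).toNat) /
              (i * ((n + m).choose m))) (x : ℝ) :
    ∃ C > 0, ∃ h₀ > 0, ∀ h : ℝ, 0 < h → h ≤ h₀ →
      |deriv f x - (1 / h) * ∑ i ∈ Finset.Icc (-(m : ℤ)) n,
          c i * (f (x + i * h) - f x)| ≤ C * h ^ (n + m) :=
  centered_difference_order_general m n hn f hf c hc x
end
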